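/- Let Δ ⊂ ℝ² be a full-dimensional lattice polygon with |Δ ∩ ℤ²| ≥ 6. If there exists a nonzero polynomial q ∈ ℂ[x,y] of total degree ≤ 2 vanishing at every point of Δ ∩ ℤ², then lw(Δ) ≤ 2. -/

import Mathlib

/-!
Among five lattice points of `Δ` two, `P` and `Q`, agree mod `2`, so `P`, their midpoint and `Q`
are three lattice points of `Δ` on one line and on the conic; hence the conic contains that line
and is `ℓ₀ ℓ₁` with `ℓ₀` the line `PQ`. In a lattice basis in which `PQ` is the `x`-axis, all
lattice points of `Δ` off the axis lie on the line `ℓ₁ = 0`. If one of them has height `≥ 2`, the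
triangle it spans with the axis contains two lattice points of height `1` as soon as the axis chord
has length `≥ 3`, which is impossible; so the axis chord is `[0, 2]`, the lattice points of heights
`1` and `2` in the triangle show that `ℓ₁` has direction `(d, 1)`, and `Δ` lies in the strip
`0 ≤ x - d y ≤ 2`. Otherwise all lattice points of `Δ` have height `-1`, `0` or `1`.
-/

open MvPolynomial

/-- The canonical embedding of `ℤ^k` into `ℝ^k`. -/
def castR {k : ℕ} (p : Fin k → ℤ) : Fin k → ℝ := fun i => (p i : ℝ)

/-- The lattice width of `Δ ⊆ ℝ^k` in the direction `v ∈ ℤ^k`: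
`lw_v(Δ) = max_{x ∈ Δ} ⟨x,v⟩ - min_{x ∈ Δ} ⟨x,v⟩`. -/
noncomputable def lwv (k : ℕ) (Δ : Set (Fin k → ℝ)) (v : Fin k → ℤ) : ℝ :=
  sSup ((fun x : Fin k → ℝ => ∑ i, x i * (v i : ℝ)) '' Δ) -
    sInf ((fun x : Fin k → ℝ => ∑ i, x i * (v i : ℝ)) '' Δ)

/-- The lattice width of `Δ ⊆ ℝ^k`: the minimum of `lw_v(Δ)` over nonzero `v ∈ ℤ^k`. -/
noncomputable def lw (k : ℕ) (Δ : Set (Fin k → ℝ)) : ℝ :=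
  sInf {w : ℝ | ∃ v : Fin k → ℤ, v ≠ 0 ∧ w = lwv k Δ v}

lemma eval_eq_of_totalDegree_le_two {R : Type*} [CommRing R] (q : MvPolynomial (Fin 2) R)
    (hq : q.totalDegree ≤ 2) :
    ∃ a b c d e f : R, ∀ X : Fin 2 → R,
      eval X q = a * X 0 ^ 2 + b * X 0 * X 1 + c * X 1 ^ 2 + d * X 0 + e * X 1 + f := by
  classical
  let mono : ℕ × ℕ → Fin 2 →₀ ℕ := fun ij => Finsupp.single 0 ij.1 + Finsupp.single 1 ij.2
  have hmono : Function.Injective mono := by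
    intro ij kl h
    exact Prod.ext (by simpa [mono] using DFunLike.congr_fun h 0)
      (by simpa [mono] using DFunLike.congr_fun h 1)
  let E : Finset (ℕ × ℕ) := (Finset.range 3 ×ˢ Finset.range 3).filter (fun ij => ij.1 + ij.2 ≤ 2)
  have hsupp : q.support ⊆ E.image mono := by
    intro m hm
    have hdeg : m 0 + m 1 ≤ 2 := by
      have := le_totalDegree hm
      rw [Finsupp.sum_fintype _ _ fun _ => rfl, Fin.sum_univ_two] at this
      omega
    refine Finset.mem_image.mpr ⟨(m 0, m 1), ?_, ?_⟩
    · simp [E]; omega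
    · ext i; fin_cases i <;> simp [mono]
  refine ⟨coeff (mono (2, 0)) q, coeff (mono (1, 1)) q, coeff (mono (0, 2)) q,
    coeff (mono (1, 0)) q, coeff (mono (0, 1)) q, coeff (mono (0, 0)) q, fun X => ?_⟩
  rw [eval_eq', Finset.sum_subset hsupp fun m _ hm => by rw [notMem_support_iff.mp hm, zero_mul],
    Finset.sum_image fun x _ y _ h => hmono h]
  simp only [E, mono, Finset.sum_filter, Finset.sum_product, Finset.sum_range_succ,
    Finset.sum_range_zero, Fin.prod_univ_two, Finsupp.add_apply, Finsupp.single_apply]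
  norm_num
  ring

def IsQuadratic {K : Type*} [CommRing K] (F : K → K → K) : Prop :=
  ∃ a b c d e f : K, ∀ x y, F x y = a * x ^ 2 + b * x * y + c * y ^ 2 + d * x + e * y + f

lemma isQuadratic_eval_affine {K : Type*} [CommRing K] {q : MvPolynomial (Fin 2) K}
    (hq : q.totalDegree ≤ 2) (p w u : Fin 2 → K) :
    IsQuadratic fun x y => eval (p + x • w + y • u) q := by
  obtain ⟨a, b, c, d, e, f, hq⟩ := eval_eq_of_totalDegree_le_two q hq
  refine ⟨a * w 0 ^ 2 + b * w 0 * w 1 + c * w 1 ^ 2,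
    2 * a * w 0 * u 0 + b * (w 0 * u 1 + w 1 * u 0) + 2 * c * w 1 * u 1,
    a * u 0 ^ 2 + b * u 0 * u 1 + c * u 1 ^ 2,
    2 * a * p 0 * w 0 + b * (p 0 * w 1 + p 1 * w 0) + 2 * c * p 1 * w 1 + d * w 0 + e * w 1,
    2 * a * p 0 * u 0 + b * (p 0 * u 1 + p 1 * u 0) + 2 * c * p 1 * u 1 + d * u 0 + e * u 1,
    eval p q, fun x y => ?_⟩
  simp only [hq, Pi.add_apply, Pi.smul_apply, smul_eq_mul]
  ring

lemma IsQuadratic.exists_eq_mul {K : Type*} [Field K] [CharZero K] {F : K → K → K}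
    (hF : IsQuadratic F) {g : K} (hg : g ≠ 0) (h₀ : F 0 0 = 0) (h₁ : F g 0 = 0)
    (h₂ : F (2 * g) 0 = 0) : ∃ b c e : K, ∀ x y, F x y = y * (b * x + c * y + e) := by
  obtain ⟨a, b, c, d, e, f, hF⟩ := hF
  rw [hF] at h₀ h₁ h₂
  have hf : f = 0 := by linear_combination h₀
  have ha : a * g ^ 2 = 0 := by linear_combination (h₂ - 2 * h₁ + h₀) / 2
  have ha : a = 0 := by simpa [hg] using ha
  have hd : d * g = 0 := by linear_combination h₁ - h₀ - g ^ 2 * ha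
  have hd : d = 0 := by simpa [hg] using hd
  exact ⟨b, c, e, fun x y => by rw [hF, ha, hd, hf]; ring⟩

lemma eq_add_smul_add_smul_of_det_eq_one {R : Type*} [CommRing R] {w u : Fin 2 → R}
    (h : w 0 * u 1 - w 1 * u 0 = 1) (P z : Fin 2 → R) :
    z = P + ((z - P) 0 * u 1 - (z - P) 1 * u 0) • w + (w 0 * (z - P) 1 - w 1 * (z - P) 0) • u := by
  ext i
  fin_cases i <;>
    simp only [Fin.zero_eta, Fin.mk_one, Pi.add_apply, Pi.sub_apply, Pi.smul_apply, smul_eq_mul]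
  · linear_combination (P 0 - z 0) * h
  · linear_combination (P 1 - z 1) * h

lemma sub_mul_sub_eq_of_affine_eq_zero {K : Type*} [Field K] {b c e : K} (hℓ : ![b, c, e] ≠ 0)
    {x₁ y₁ x₂ y₂ x₃ y₃ : K} (h₁ : b * x₁ + c * y₁ + e = 0) (h₂ : b * x₂ + c * y₂ + e = 0)
    (h₃ : b * x₃ + c * y₃ + e = 0) : (x₂ - x₁) * (y₃ - y₁) = (x₃ - x₁) * (y₂ - y₁) := by
  have hdet : (!![x₁, x₂, x₃; y₁, y₂, y₃; 1, 1, 1] : Matrix (Fin 3) (Fin 3) K).det = 0 := by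
    refine Matrix.exists_vecMul_eq_zero_iff.mp ⟨_, hℓ, ?_⟩
    ext j
    fin_cases j <;> simpa [Matrix.vecMul, dotProduct, Fin.sum_univ_three]
  simp only [Matrix.det_fin_three, Matrix.of_apply, Matrix.cons_val', Matrix.cons_val_zero,
    Matrix.cons_val_fin_one, Matrix.cons_val_one, Matrix.cons_val] at hdet
  linear_combination hdet

/-- The lattice points of a convex subset of `ℝ²`, in coordinates: by Carathéodory it suffices
to ask for the lattice points of triangles. -/
def IsLatticeConvex (T : ℤ → ℤ → Prop) : Prop :=
  ∀ ⦃x₁ y₁ x₂ y₂ x₃ y₃ x y : ℤ⦄ (l₁ l₂ l₃ : ℝ), T x₁ y₁ → T x₂ y₂ → T x₃ y₃ →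
    0 ≤ l₁ → 0 ≤ l₂ → 0 ≤ l₃ → l₁ + l₂ + l₃ = 1 →
    l₁ * x₁ + l₂ * x₂ + l₃ * x₃ = x → l₁ * y₁ + l₂ * y₂ + l₃ * y₃ = y → T x y

def OffAxisCollinear (T : ℤ → ℤ → Prop) : Prop :=
  ∀ ⦃x₁ y₁ x₂ y₂ x₃ y₃ : ℤ⦄, T x₁ y₁ → T x₂ y₂ → T x₃ y₃ → y₁ ≠ 0 → y₂ ≠ 0 → y₃ ≠ 0 →
    (x₂ - x₁) * (y₃ - y₁) = (x₃ - x₁) * (y₂ - y₁)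

lemma Int.exists_mul_mem_Icc (n : ℤ) {m : ℤ} (hm : 0 < m) : ∃ k, m * k ∈ Set.Icc n (n + m - 1) :=
  ⟨(n + m - 1) / m, by
    have := Int.mul_ediv_add_emod (n + m - 1) m
    have := Int.emod_nonneg (n + m - 1) hm.ne'
    have := Int.emod_lt_of_pos (n + m - 1) hm
    constructor <;> linarith⟩

lemma OffAxisCollinear.neg_snd {T : ℤ → ℤ → Prop} (hT : OffAxisCollinear T) :
    OffAxisCollinear fun x y => T x (-y) := by
  intro x₁ y₁ x₂ y₂ x₃ y₃ h₁ h₂ h₃ hy₁ hy₂ hy₃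
  linear_combination -hT h₁ h₂ h₃ (neg_ne_zero.mpr hy₁) (neg_ne_zero.mpr hy₂) (neg_ne_zero.mpr hy₃)

namespace IsLatticeConvex

variable {T : ℤ → ℤ → Prop}

lemma neg_snd (hT : IsLatticeConvex T) : IsLatticeConvex fun x y => T x (-y) := by
  intro x₁ y₁ x₂ y₂ x₃ y₃ x y l₁ l₂ l₃ h₁ h₂ h₃ hl₁ hl₂ hl₃ hl hx hy
  refine hT l₁ l₂ l₃ h₁ h₂ h₃ hl₁ hl₂ hl₃ hl hx ?_
  push_cast
  linear_combination -hy

lemma mem_of_mem_triangle (hT : IsLatticeConvex T) {A B x₀ y₀ x h : ℤ} (hA : T A 0) (hB : T B 0)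
    (hz : T x₀ y₀) (hAB : A < B) (hy₀ : 0 < y₀) (hh₀ : 0 ≤ h)
    (hlo : A * (y₀ - h) + h * x₀ ≤ y₀ * x) (hhi : y₀ * x ≤ B * (y₀ - h) + h * x₀) : T x h := by
  have hy₀' : (0 : ℝ) < y₀ := by exact_mod_cast hy₀
  have hAB' : (0 : ℝ) < B - A := by rw [sub_pos]; exact_mod_cast hAB
  have hlo' : (A : ℝ) * (y₀ - h) + h * x₀ ≤ y₀ * x := by exact_mod_cast hlo
  have hhi' : (y₀ : ℝ) * x ≤ B * (y₀ - h) + h * x₀ := by exact_mod_cast hhi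
  have hh₀' : (0 : ℝ) ≤ h := by exact_mod_cast hh₀
  refine hT ((B * (y₀ - h) + h * x₀ - y₀ * x) / (y₀ * (B - A)))
    ((y₀ * x - h * x₀ - A * (y₀ - h)) / (y₀ * (B - A))) (h / y₀) hA hB hz
    (div_nonneg (by linarith) (by positivity)) (div_nonneg (by linarith) (by positivity))
    (by positivity) ?_ ?_ ?_
  · field_simp
    ring
  · field_simp
    ring
  · push_cast
    field_simp
    ring

lemma exists_mem_of_slice (hT : IsLatticeConvex T) {A B x₀ y₀ h : ℤ} (hA : T A 0) (hB : T B 0)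
    (hz : T x₀ y₀) (hAB : A < B) (hh₀ : 0 ≤ h) (hy₀ : 0 < y₀)
    (hlen : y₀ - 1 ≤ (B - A) * (y₀ - h)) :
    ∃ x, T x h ∧ A * (y₀ - h) + h * x₀ ≤ y₀ * x ∧ y₀ * x ≤ B * (y₀ - h) + h * x₀ := by
  obtain ⟨x, hlo, hhi⟩ := Int.exists_mul_mem_Icc (A * (y₀ - h) + h * x₀) hy₀
  have hhi' : y₀ * x ≤ B * (y₀ - h) + h * x₀ := by linarith
  exact ⟨x, hT.mem_of_mem_triangle hA hB hz hAB hy₀ hh₀ hlo hhi', hlo, hhi'⟩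

/-- A triangle with apex at height `≥ 2` over a base of length `≥ 3` contains two lattice points
at height `1`, and these are not collinear with the apex. -/
lemma le_add_two_of_mem_axis (hT : IsLatticeConvex T) (hcol : OffAxisCollinear T)
    {A B x₀ y₀ : ℤ} (hA : T A 0) (hB : T B 0) (hz : T x₀ y₀) (hy₀ : 2 ≤ y₀) : B ≤ A + 2 := by
  by_contra! hAB
  obtain ⟨x, hlo, hhi⟩ := Int.exists_mul_mem_Icc (A * (y₀ - 1) + x₀) (by omega : 0 < y₀)
  have hmem : ∀ x', A * (y₀ - 1) + x₀ ≤ y₀ * x' → y₀ * x' ≤ B * (y₀ - 1) + x₀ → T x' 1 :=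
    fun x' hlo hhi => hT.mem_of_mem_triangle hA hB hz (by omega) (by omega) zero_le_one
      (by linarith) (by linarith)
  have hB' : (A + 3) * (y₀ - 1) ≤ B * (y₀ - 1) := by nlinarith
  have := hcol (hmem x hlo (by nlinarith)) (hmem (x + 1) (by linarith) (by nlinarith)) hz
    one_ne_zero one_ne_zero (by omega)
  omega

lemma mem_Icc_of_mem_axis (hT : IsLatticeConvex T) (hcol : OffAxisCollinear T) {x₀ y₀ j : ℤ}
    (h₀ : T 0 0) (h₂ : T 2 0) (hz : T x₀ y₀) (hy₀ : 2 ≤ y₀) (hj : T j 0) : j ∈ Set.Icc 0 2 :=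
  ⟨by linarith [hT.le_add_two_of_mem_axis hcol hj h₂ hz hy₀],
    by linarith [hT.le_add_two_of_mem_axis hcol h₀ hj hz hy₀]⟩

lemma exists_shear_strip_of_high_point (hT : IsLatticeConvex T) (hcol : OffAxisCollinear T)
    {N x₀ y₀ : ℤ} (h₀ : T 0 0) (hN : T N 0) (hN₂ : 2 ≤ N) (hz : T x₀ y₀) (hy₀ : 2 ≤ y₀) :
    ∃ d, ∀ x y, T x y → 0 ≤ x - d * y ∧ x - d * y ≤ 2 := by
  obtain rfl : N = 2 :=
    le_antisymm (by simpa using hT.le_add_two_of_mem_axis hcol h₀ hN hz hy₀) hN₂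
  obtain ⟨x₁, h₁, hlo, hhi⟩ :=
    hT.exists_mem_of_slice h₀ hN hz two_pos zero_le_one (by omega) (by linarith)
  -- the line through the points at heights `1` and `y₀` has direction `(d, 1)`
  obtain ⟨d, hd⟩ : ∃ d, x₀ - x₁ = (y₀ - 1) * d := by
    rcases eq_or_lt_of_le hy₀ with rfl | hy₀
    · exact ⟨x₀ - x₁, by ring⟩
    obtain ⟨x₂, h₂, -⟩ :=
      hT.exists_mem_of_slice h₀ hN hz two_pos zero_le_two (by omega) (by linarith)
    exact ⟨x₂ - x₁, by
      linear_combination -hcol h₁ h₂ hz one_ne_zero two_ne_zero (by omega)⟩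
  refine ⟨d, fun x y hxy => ?_⟩
  rcases eq_or_ne y 0 with rfl | hy
  · simpa using hT.mem_Icc_of_mem_axis hcol h₀ hN hz hy₀ hxy
  have hline : (y₀ - 1) * (x - d * y - (x₁ - d)) = 0 := by
    linear_combination -hcol h₁ hz hxy one_ne_zero (by omega) hy + (y - 1) * hd
  have hx : x - d * y = x₁ - d :=
    sub_eq_zero.mp ((mul_eq_zero.mp hline).resolve_left (by omega))
  have hc : (y₀ - 1) * (x₁ - d) = y₀ * x₁ - x₀ := by linear_combination hd
  rw [hx]
  constructor <;> nlinarith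

lemma exists_width_two_strip (hT : IsLatticeConvex T) (hcol : OffAxisCollinear T) {N : ℤ}
    (h₀ : T 0 0) (hN : T N 0) (hN₂ : 2 ≤ N) : ∃ v₁ v₂ c : ℤ, (v₁, v₂) ≠ (0, 0) ∧
      ∀ x y, T x y → c ≤ v₁ * x + v₂ * y ∧ v₁ * x + v₂ * y ≤ c + 2 := by
  by_cases hhigh : ∃ x₀ y₀, T x₀ y₀ ∧ 2 ≤ y₀
  · obtain ⟨x₀, y₀, hz, hy₀⟩ := hhigh
    obtain ⟨d, hd⟩ := hT.exists_shear_strip_of_high_point hcol h₀ hN hN₂ hz hy₀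
    exact ⟨1, -d, 0, by simp, fun x y hxy => by have := hd x y hxy; constructor <;> linarith⟩
  by_cases hlow : ∃ x₀ y₀, T x₀ y₀ ∧ y₀ ≤ -2
  · obtain ⟨x₀, y₀, hz, hy₀⟩ := hlow
    obtain ⟨d, hd⟩ := hT.neg_snd.exists_shear_strip_of_high_point hcol.neg_snd
      (by simpa using h₀) (by simpa using hN) hN₂ (x₀ := x₀) (y₀ := -y₀) (by simpa using hz)
      (by omega)
    refine ⟨1, d, 0, by simp, fun x y hxy => ?_⟩
    have := hd x (-y) (by simpa using hxy)
    constructor <;> linarith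
  push Not at hhigh hlow
  refine ⟨0, 1, -1, by simp, fun x y hxy => ?_⟩
  have := hhigh x y hxy
  have := hlow x y hxy
  omega

end IsLatticeConvex

lemma offAxisCollinear_of_conic {K : Type*} [Field K] [CharZero K] {T : ℤ → ℤ → Prop}
    {q : MvPolynomial (Fin 2) K} (hq0 : q ≠ 0) (hqdeg : q.totalDegree ≤ 2) {P w u : Fin 2 → K}
    (hdet : w 0 * u 1 - w 1 * u 0 = 1)
    (hvan : ∀ x y : ℤ, T x y → eval (P + (x : K) • w + (y : K) • u) q = 0) {g : ℤ} (hg : g ≠ 0)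
    (h₀ : T 0 0) (h₁ : T g 0) (h₂ : T (2 * g) 0) : OffAxisCollinear T := by
  obtain ⟨b, c, e, hbce⟩ := (isQuadratic_eval_affine hqdeg P w u).exists_eq_mul
    (Int.cast_ne_zero.mpr hg) (by simpa using hvan 0 0 h₀) (by simpa using hvan g 0 h₁)
    (by simpa using hvan _ _ h₂)
  have hℓ : ![b, c, e] ≠ 0 := by
    intro hℓ
    obtain ⟨rfl, rfl, rfl⟩ : b = 0 ∧ c = 0 ∧ e = 0 :=
      ⟨congrFun hℓ 0, congrFun hℓ 1, congrFun hℓ 2⟩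
    refine hq0 (MvPolynomial.funext fun X => ?_)
    rw [eq_add_smul_add_smul_of_det_eq_one hdet P X, hbce]
    simp
  have hline : ∀ x y, T x y → y ≠ 0 → b * (x : K) + c * (y : K) + e = 0 := fun x y hxy hy =>
    (mul_eq_zero.mp ((hbce _ _).symm.trans (hvan x y hxy))).resolve_left (by exact_mod_cast hy)
  intro x₁ y₁ x₂ y₂ x₃ y₃ h₁ h₂ h₃ hy₁ hy₂ hy₃
  exact_mod_cast sub_mul_sub_eq_of_affine_eq_zero hℓ (hline _ _ h₁ hy₁) (hline _ _ h₂ hy₂)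
    (hline _ _ h₃ hy₃)

lemma isLatticeConvex_comp_affine {Δ : Set (Fin 2 → ℝ)} (hΔ : Convex ℝ Δ) (P w u : Fin 2 → ℤ) :
    IsLatticeConvex fun x y => castR (P + x • w + y • u) ∈ Δ := by
  intro x₁ y₁ x₂ y₂ x₃ y₃ x y l₁ l₂ l₃ h₁ h₂ h₃ hl₁ hl₂ hl₃ hl hx hy
  have hmem := hΔ.sum_mem (t := Finset.univ) (w := ![l₁, l₂, l₃])
    (z := ![castR (P + x₁ • w + y₁ • u), castR (P + x₂ • w + y₂ • u), castR (P + x₃ • w + y₃ • u)])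
    (by simp [Fin.forall_fin_succ, hl₁, hl₂, hl₃]) (by simpa [Fin.sum_univ_three] using hl)
    fun i _ => by fin_cases i <;> assumption
  convert hmem using 1
  ext i
  simp only [castR, Finset.sum_apply, Fin.sum_univ_three, Matrix.cons_val_zero, Matrix.cons_val_one,
    Matrix.cons_val, Pi.add_apply, Pi.smul_apply, smul_eq_mul, Int.cast_add, Int.cast_mul]
  linear_combination (-(P i : ℝ)) * hl - (w i : ℝ) * hx - (u i : ℝ) * hy

lemma exists_add_add_two_smul_mem {k : ℕ} {Δ : Set (Fin k → ℝ)} (hΔ : Convex ℝ Δ)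
    (h : 2 ^ k < {p : Fin k → ℤ | castR p ∈ Δ}.ncard) :
    ∃ P v : Fin k → ℤ, v ≠ 0 ∧ castR P ∈ Δ ∧ castR (P + v) ∈ Δ ∧ castR (P + 2 • v) ∈ Δ := by
  obtain ⟨P, hP, Q, hQ, hPQ, hmod⟩ := Set.exists_ne_map_eq_of_ncard_lt_of_maps_to
    (t := (Set.univ : Set (Fin k → ZMod 2))) (f := fun (p : Fin k → ℤ) i => (p i : ZMod 2))
    (by simpa using h) fun _ _ => trivial
  have hdvd (i : Fin k) : 2 ∣ Q i - P i := by
    exact_mod_cast (ZMod.intCast_eq_intCast_iff_dvd_sub _ _ 2).mp (congrFun hmod i)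
  set v : Fin k → ℤ := fun i => (Q i - P i) / 2
  have hQv (i : Fin k) : Q i = P i + 2 * v i := by simp [v, Int.mul_ediv_cancel' (hdvd i)]
  have hQ' : P + 2 • v = Q := by
    ext i
    simp [hQv]
  have hmid : castR (P + v) = (1 / 2 : ℝ) • castR P + (1 / 2 : ℝ) • castR Q := by
    ext i
    simp only [castR, Pi.add_apply, Pi.smul_apply, smul_eq_mul, hQv, Int.cast_add, Int.cast_mul,
      Int.cast_ofNat]
    ring
  refine ⟨P, v, fun hv => hPQ ?_, hP, ?_, hQ'.symm ▸ hQ⟩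
  · simpa [hv] using hQ'
  · rw [hmid]
    exact hΔ hP hQ (by norm_num) (by norm_num) (by norm_num)

lemma exists_eq_smul_of_det_eq_one {v : Fin 2 → ℤ} (hv : v ≠ 0) :
    ∃ g : ℤ, 0 < g ∧ ∃ w u : Fin 2 → ℤ, v = g • w ∧ w 0 * u 1 - w 1 * u 0 = 1 := by
  have hg : 0 < Int.gcd (v 0) (v 1) := Int.gcd_pos_iff.mpr <| by
    by_contra! h
    exact hv (by ext i; fin_cases i <;> simp [h])
  obtain ⟨a, b, hab⟩ := Int.isCoprime_iff_gcd_eq_one.mpr (Int.gcd_div_gcd_div_gcd hg)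
  refine ⟨Int.gcd (v 0) (v 1), by omega, fun i => v i / Int.gcd (v 0) (v 1), ![-b, a], ?_, ?_⟩
  · ext i
    fin_cases i
    · exact (Int.mul_ediv_cancel' (Int.gcd_dvd_left _ _)).symm
    · exact (Int.mul_ediv_cancel' (Int.gcd_dvd_right _ _)).symm
  · simp only [Matrix.cons_val_zero, Matrix.cons_val_one]
    linear_combination hab

section LatticeWidth

variable {k : ℕ}

lemma lwv_nonneg {Δ : Set (Fin k → ℝ)} (hΔ : IsCompact Δ) (v : Fin k → ℤ) : 0 ≤ lwv k Δ v := by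
  have hf : ContinuousOn (fun x : Fin k → ℝ => ∑ i, x i * (v i : ℝ)) Δ := by fun_prop
  exact sub_nonneg.mpr (Real.sInf_le_sSup _ (hΔ.bddBelow_image hf) (hΔ.bddAbove_image hf))

lemma lw_le_lwv {Δ : Set (Fin k → ℝ)} (hΔ : IsCompact Δ) {v : Fin k → ℤ} (hv : v ≠ 0) :
    lw k Δ ≤ lwv k Δ v :=
  csInf_le ⟨0, by rintro _ ⟨v, -, rfl⟩; exact lwv_nonneg hΔ v⟩ ⟨v, hv, rfl⟩

lemma lwv_convexHull_le {A : Set (Fin k → ℝ)} (hA : A.Nonempty) {v : Fin k → ℤ} {c w : ℝ}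
    (h : ∀ x ∈ A, c ≤ ∑ i, x i * (v i : ℝ) ∧ ∑ i, x i * (v i : ℝ) ≤ c + w) :
    lwv k (convexHull ℝ A) v ≤ w := by
  have hlin : IsLinearMap ℝ fun x : Fin k → ℝ => ∑ i, x i * (v i : ℝ) :=
    ⟨fun x y => by simp [add_mul, Finset.sum_add_distrib],
      fun a x => by simp [Finset.mul_sum, mul_assoc]⟩
  have hstrip : convexHull ℝ A ⊆
      {x | c ≤ ∑ i, x i * (v i : ℝ)} ∩ {x | ∑ i, x i * (v i : ℝ) ≤ c + w} :=
    convexHull_min h ((convex_halfSpace_ge hlin c).inter (convex_halfSpace_le hlin (c + w)))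
  have hne := (hA.mono (subset_convexHull ℝ A)).image fun x : Fin k → ℝ => ∑ i, x i * (v i : ℝ)
  have hsup := csSup_le hne (Set.forall_mem_image.mpr fun x hx => (hstrip hx).2)
  have hinf := le_csInf hne (Set.forall_mem_image.mpr fun x hx => (hstrip hx).1)
  unfold lwv
  linarith

lemma lw_convexHull_image_le {V : Set (Fin k → ℤ)} (hV : V.Finite) (hne : V.Nonempty)
    {v : Fin k → ℤ} (hv : v ≠ 0) {c w : ℤ}
    (h : ∀ p ∈ V, c ≤ ∑ i, p i * v i ∧ ∑ i, p i * v i ≤ c + w) :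
    lw k (convexHull ℝ (castR '' V)) ≤ w := by
  refine (lw_le_lwv ((hV.image _).isCompact_convexHull ℝ) hv).trans
    (lwv_convexHull_le (c := c) (hne.image _) ?_)
  rintro _ ⟨p, hp, rfl⟩
  simp only [castR]
  exact_mod_cast h p hp

end LatticeWidth

lemma exists_strip_of_det_eq_one {S : Set (Fin 2 → ℤ)} {P w u : Fin 2 → ℤ}
    (hdet : w 0 * u 1 - w 1 * u 0 = 1) {v₁ v₂ c : ℤ} (hv : (v₁, v₂) ≠ (0, 0))
    (hS : ∀ x y, P + x • w + y • u ∈ S → c ≤ v₁ * x + v₂ * y ∧ v₁ * x + v₂ * y ≤ c + 2) :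
    ∃ V : Fin 2 → ℤ, V ≠ 0 ∧ ∃ c' : ℤ, ∀ p ∈ S, c' ≤ ∑ i, p i * V i ∧ ∑ i, p i * V i ≤ c' + 2 := by
  -- chosen so that `v₁ * x + v₂ * y = ∑ i, (p - P) i * V i` for `p = P + x • w + y • u`
  set V : Fin 2 → ℤ := ![v₁ * u 1 - v₂ * w 1, v₂ * w 0 - v₁ * u 0]
  refine ⟨V, fun hV => hv ?_, c + ∑ i, P i * V i, fun p hp => ?_⟩
  · have h₀ := congrFun hV 0
    have h₁ := congrFun hV 1
    simp only [V, Matrix.cons_val_zero, Matrix.cons_val_one, Pi.zero_apply] at h₀ h₁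
    ext
    · linear_combination w 0 * h₀ + w 1 * h₁ - v₁ * hdet
    · linear_combination u 0 * h₀ + u 1 * h₁ - v₂ * hdet
  have := hS _ _ ((eq_add_smul_add_smul_of_det_eq_one hdet P p).symm ▸ hp)
  simp only [Fin.sum_univ_two, V, Matrix.cons_val_zero, Matrix.cons_val_one, Pi.sub_apply] at this ⊢
  constructor <;> linarith

theorem lw_le_two_of_conic_general (V : Finset (Fin 2 → ℤ)) (Δ : Set (Fin 2 → ℝ))
    (hΔ : Δ = convexHull ℝ (castR '' (V : Set (Fin 2 → ℤ))))
    (h6 : 6 ≤ {p : Fin 2 → ℤ | castR p ∈ Δ}.ncard)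
    (q : MvPolynomial (Fin 2) ℂ) (hq0 : q ≠ 0) (hqdeg : q.totalDegree ≤ 2)
    (hvan : ∀ p : Fin 2 → ℤ, castR p ∈ Δ → MvPolynomial.eval (fun i => (p i : ℂ)) q = 0) :
    lw 2 Δ ≤ 2 := by
  have hconv : Convex ℝ Δ := hΔ ▸ convex_convexHull ℝ _
  obtain ⟨P, v, hv, hP, hM, hQ⟩ := exists_add_add_two_smul_mem hconv (by norm_num; omega)
  obtain ⟨g, hg, w, u, rfl, hdet⟩ := exists_eq_smul_of_det_eq_one hv
  set T : ℤ → ℤ → Prop := fun x y => castR (P + x • w + y • u) ∈ Δ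
  have hT₀ : T 0 0 := by simpa [T] using hP
  have hT₁ : T g 0 := by simpa [T] using hM
  have hT₂ : T (2 * g) 0 := by convert hQ using 2; module
  have hcol : OffAxisCollinear T :=
    offAxisCollinear_of_conic hq0 hqdeg (P := fun i => (P i : ℂ)) (w := fun i => (w i : ℂ))
      (u := fun i => (u i : ℂ)) (by exact_mod_cast hdet)
      (fun x y hxy => (congrArg (fun X => eval X q) (by ext i; simp)).trans (hvan _ hxy))
      hg.ne' hT₀ hT₁ hT₂
  obtain ⟨v₁, v₂, c, hv₁₂, hstrip⟩ :=
    (isLatticeConvex_comp_affine hconv P w u).exists_width_two_strip hcol hT₀ hT₂ (by omega)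
  obtain ⟨V', hV', c', hV'strip⟩ :=
    exists_strip_of_det_eq_one (S := {p | castR p ∈ Δ}) hdet hv₁₂ hstrip
  subst hΔ
  exact_mod_cast lw_convexHull_image_le V.finite_toSet
    (convexHull_nonempty_iff.mp ⟨_, hP⟩).of_image hV' (w := 2)
    fun p hp => hV'strip p (subset_convexHull ℝ _ (Set.mem_image_of_mem castR hp))

/-- If the lattice points of a full-dimensional lattice polygon `Δ` with at least `6`
lattice points lie on a nonzero conic, then `lw(Δ) ≤ 2`. -/
theorem lw_le_two_of_conic (V : Finset (Fin 2 → ℤ)) (Δ : Set (Fin 2 → ℝ))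
    (hΔ : Δ = convexHull ℝ (castR '' (V : Set (Fin 2 → ℤ))))
    (hfull : ¬ Collinear ℝ Δ)
    (h6 : 6 ≤ {p : Fin 2 → ℤ | castR p ∈ Δ}.ncard)
    (q : MvPolynomial (Fin 2) ℂ) (hq0 : q ≠ 0) (hqdeg : q.totalDegree ≤ 2)
    (hvan : ∀ p : Fin 2 → ℤ, castR p ∈ Δ → MvPolynomial.eval (fun i => (p i : ℂ)) q = 0) :
    lw 2 Δ ≤ 2 :=
  lw_le_two_of_conic_general V Δ hΔ h6 q hq0 hqdeg hvan
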